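/- Exact trace-distance formula η_ξ for block-diagonal states: with Γ^{S_in R} = Σ_{m,n,κ} [C(ℓ,n)C(k,κ)C(N+k−ℓ,m−n)/C(N+k,m)]·χ_{m−κ}·π_{m−n}^{S_in}⊗π_κ^R and Γ^{S_in}⊗π^R its product counterpart (with π^R = 2^{-k}Σ_κ C(k,κ)π_κ^R implicitly), the trace distance equals ‖Γ^{S_in R} − Γ^{S_in}⊗π^R‖₁ = 2^{-k} Σ_{ν=0}^{N+k−ℓ} Σ_{κ=0}^{k} C(N+k−ℓ,ν)C(k,κ)·|Σ_m [C(ℓ,m−ν)/C(N+k,m)]·(χ_{m−κ} − 2^{-k}Σ_{κ'} C(k,κ')χ_{m−κ'})|. -/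

import Mathlib

open scoped Matrix Kronecker ComplexOrder
open Matrix MeasureTheory

noncomputable section

def traceNorm {n : Type*} [Fintype n] [DecidableEq n] (A : Matrix n n ℂ) : ℝ :=
  (((Matrix.posSemidef_conjTranspose_mul_self A).1.eigenvectorUnitary : Matrix n n ℂ) *
      Matrix.diagonal (((↑) : ℝ → ℂ) ∘ Real.sqrt ∘
        (Matrix.posSemidef_conjTranspose_mul_self A).1.eigenvalues) *
      (star ((Matrix.posSemidef_conjTranspose_mul_self A).1.eigenvectorUnitary : Matrix n n ℂ))).trace.re

def IsDensity {n : Type*} [Fintype n] (ρ : Matrix n n ℂ) : Prop :=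
  ρ.PosSemidef ∧ ρ.trace = 1

def ptraceB {a b : Type*} [Fintype b] (M : Matrix (a × b) (a × b) ℂ) : Matrix a a ℂ :=
  Matrix.of fun i j => ∑ x : b, M (i, x) (j, x)

def ptraceA {a b : Type*} [Fintype a] (M : Matrix (a × b) (a × b) ℂ) : Matrix b b ℂ :=
  Matrix.of fun i j => ∑ x : a, M (x, i) (x, j)

def condMinEntropy {x c : Type*} [Fintype x] [DecidableEq x] [Fintype c] [DecidableEq c]
    (ρ : Matrix (x × c) (x × c) ℂ) : ℝ :=
  sSup {l : ℝ | ∃ σ : Matrix c c ℂ, IsDensity σ ∧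
    ((((2:ℝ) ^ (-l) : ℝ) : ℂ) • ((1 : Matrix x x ℂ) ⊗ₖ σ) - ρ).PosSemidef}

def outer {n : Type*} (v : n → ℂ) : Matrix n n ℂ :=
  Matrix.of fun i j => v i * star (v j)

/-- Binomial coefficient with an integer lower argument, zero for negative arguments. -/
def chooseZ (a : ℕ) (b : ℤ) : ℕ :=
  if b < 0 then 0 else a.choose b.toNat

/-- The number of up-spins (Hamming weight) of a spin configuration. -/
def wt {ι : Type*} [Fintype ι] (v : ι → Bool) : ℕ :=
  (Finset.univ.filter fun i => v i = true).card

/-- The maximally mixed state on the sector of `n`-qubit configurations with `ν` up-spins. -/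
def secMix (n : ℕ) (ν : ℤ) : Matrix (Fin n → Bool) (Fin n → Bool) ℂ :=
  ((chooseZ n ν : ℂ))⁻¹ •
    Matrix.diagonal fun v => if (wt v : ℤ) = ν then (1 : ℂ) else 0

lemma wt_le {n : ℕ} (v : Fin n → Bool) : wt v ≤ n := by
  classical
  simpa [wt] using (Finset.card_filter_le (Finset.univ : Finset (Fin n)) _).trans_eq (by simp)

lemma card_wt (n ν : ℕ) :
    ((Finset.univ : Finset (Fin n → Bool)).filter fun v => wt v = ν).card = n.choose ν := by
  classical
  rw [show n.choose ν = (Finset.powersetCard ν (Finset.univ : Finset (Fin n))).card by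
    rw [Finset.card_powersetCard]; simp]
  refine Finset.card_bij' (fun v _ => Finset.univ.filter fun i => v i = true)
    (fun s _ => fun i => decide (i ∈ s)) ?_ ?_ ?_ ?_
  · intro v hv
    simp only [Finset.mem_filter, Finset.mem_univ, true_and] at hv
    simp [Finset.mem_powersetCard, ← hv, wt]
  · intro s hs
    simp only [Finset.mem_powersetCard] at hs
    simp only [Finset.mem_filter, Finset.mem_univ, true_and]
    rw [← hs.2]
    simp [wt]
  · intro v hv; funext i; simp
  · intro s hs; ext i; simp

lemma sum_wt_group (n : ℕ) (f : ℕ → ℝ) :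
    ∑ v : Fin n → Bool, f (wt v) = ∑ ν ∈ Finset.range (n + 1), (n.choose ν : ℝ) * f ν := by
  classical
  rw [← Finset.sum_fiberwise_of_maps_to (g := fun v : Fin n → Bool => wt v)
    (t := Finset.range (n + 1)) (fun v _ => Finset.mem_range.2 (Nat.lt_succ_of_le (wt_le v)))]
  refine Finset.sum_congr rfl fun ν _ => ?_
  rw [Finset.sum_congr rfl (fun v hv => by
    rw [(Finset.mem_filter.1 hv).2]), Finset.sum_const, card_wt, nsmul_eq_mul]

open scoped MatrixOrder in
lemma traceNorm_diagonal' {n : Type*} [Fintype n] [DecidableEq n] (d : n → ℂ) :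
    traceNorm (Matrix.diagonal d) = ∑ i, ‖d i‖ := by
  have hM := Matrix.posSemidef_conjTranspose_mul_self (Matrix.diagonal d)
  have habs : Matrix.PosSemidef (Matrix.diagonal (fun i => (‖d i‖ : ℂ))) := by
    refine Matrix.PosSemidef.diagonal ?_
    intro i
    exact Complex.zero_le_real.2 (norm_nonneg (d i))
  have hsq : (Matrix.diagonal (fun i => (‖d i‖ : ℂ))) ^ 2
      = (Matrix.diagonal d)ᴴ * Matrix.diagonal d := by
    have hfun : (fun i => (‖d i‖ : ℂ) * (‖d i‖ : ℂ))
        = star d * d := by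
      funext i
      simp only [Pi.mul_apply, Pi.star_apply, RCLike.star_def]
      rw [← Complex.normSq_eq_conj_mul_self, ← Complex.sq_norm, Complex.ofReal_pow, pow_two]
    rw [pow_two, Matrix.diagonal_mul_diagonal, hfun, Matrix.diagonal_conjTranspose,
      Matrix.diagonal_mul_diagonal]
    rfl
  have hcfc : cfc Real.sqrt ((Matrix.diagonal d)ᴴ * Matrix.diagonal d)
      = Matrix.diagonal (fun i => (‖d i‖ : ℂ)) := by
    rw [← cfcₙ_eq_cfc, ← CFC.sqrt_eq_real_sqrt _ hM.nonneg]
    exact CFC.sqrt_unique (by rw [← pow_two]; exact hsq) habs.nonneg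
  have h1 : traceNorm (Matrix.diagonal d)
      = (cfc Real.sqrt ((Matrix.diagonal d)ᴴ * Matrix.diagonal d)).trace.re := by
    rw [hM.1.cfc_eq]; rfl
  rw [h1, hcfc, Matrix.trace_diagonal]
  simp

lemma chooseZ_natCast (a ν : ℕ) : chooseZ a (ν : ℤ) = a.choose ν := by
  unfold chooseZ; simp

lemma chooseZ_ofNat_sub (L m ν : ℕ) (h : ν ≤ m) :
    chooseZ L ((m : ℤ) - ν) = L.choose (m - ν) := by
  unfold chooseZ; rw [if_neg (by omega)]; congr 1; omega

lemma chooseZ_of_neg (L : ℕ) {b : ℤ} (h : b < 0) : chooseZ L b = 0 := by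
  unfold chooseZ; rw [if_pos h]

lemma n_collapse (L a ν : ℕ) (hν : ν ≤ a) (m : ℕ) :
    ∑ n ∈ Finset.range (L + 1),
      ((L.choose n : ℂ) * (chooseZ a ((m : ℤ) - n) : ℂ)) *
        ((chooseZ a ((m : ℤ) - n) : ℂ)⁻¹ * (if (ν : ℤ) = (m : ℤ) - n then 1 else 0))
      = (chooseZ L ((m : ℤ) - ν) : ℂ) := by
  by_cases h1 : ν ≤ m
  · by_cases h2 : m - ν ≤ L
    · rw [Finset.sum_eq_single (m - ν)]
      · rw [if_pos (by omega), show ((m : ℤ) - (m - ν : ℕ)) = (ν : ℤ) by omega,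
          chooseZ_natCast, chooseZ_ofNat_sub _ _ _ h1, mul_one, mul_assoc,
          mul_inv_cancel₀ (by exact_mod_cast (Nat.choose_pos hν).ne'), mul_one]
      · intro n _ hne
        rw [if_neg (by omega)]; ring
      · intro hnot; exact absurd (Finset.mem_range.2 (by omega)) hnot
    · rw [Finset.sum_eq_zero, eq_comm]
      · rw [chooseZ_ofNat_sub _ _ _ h1, Nat.choose_eq_zero_of_lt (by omega)]; simp
      · intro n hn
        rw [Finset.mem_range] at hn
        rw [if_neg (by omega)]; ring
  · rw [Finset.sum_eq_zero, eq_comm]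
    · rw [chooseZ_of_neg _ (by omega)]; simp
    · intro n hn
      rw [if_neg (by omega)]; ring

lemma k_collapse (kk κw : ℕ) (hκ : κw ≤ kk) (f : ℕ → ℂ) :
    ∑ κ ∈ Finset.range (kk + 1),
      (kk.choose κ : ℂ) * f κ *
        ((chooseZ kk (κ : ℤ) : ℂ)⁻¹ * (if (κw : ℤ) = (κ : ℤ) then 1 else 0))
      = f κw := by
  rw [Finset.sum_eq_single κw]
  · rw [if_pos rfl, chooseZ_natCast, mul_one, mul_comm, ← mul_assoc,
      inv_mul_cancel₀ (by exact_mod_cast (Nat.choose_pos hκ).ne'), one_mul]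
  · intro κ _ hne
    rw [if_neg (by omega)]; ring
  · intro hnot; exact absurd (Finset.mem_range.2 (by omega)) hnot

/-- Exact trace-distance formula `η_ξ` for the block-diagonal states `Γ^{S_in R}` and
`Γ^{S_in} ⊗ π^R`. -/
theorem eta_formula (N k ℓ : ℕ) (hℓ : ℓ ≤ N + k)
    (χ : ℤ → ℝ) (hχ0 : ∀ μ, 0 ≤ χ μ)
    (hχsupp : ∀ μ : ℤ, (μ < 0 ∨ (N : ℤ) < μ) → χ μ = 0)
    (hχ1 : ∑ μ ∈ Finset.range (N + 1), χ (μ : ℤ) = 1)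
    (Γ₁ : Matrix ((Fin (N + k - ℓ) → Bool) × (Fin k → Bool))
        ((Fin (N + k - ℓ) → Bool) × (Fin k → Bool)) ℂ)
    (hΓ₁ : Γ₁ = ((2 : ℂ) ^ k)⁻¹ •
      ∑ m ∈ Finset.range (N + k + 1), ∑ n ∈ Finset.range (ℓ + 1),
        ∑ κ ∈ Finset.range (k + 1),
          ((((Nat.choose ℓ n * Nat.choose k κ * chooseZ (N + k - ℓ) ((m : ℤ) - n) : ℕ) : ℂ) /
              (Nat.choose (N + k) m : ℂ)) * (χ ((m : ℤ) - κ) : ℂ)) •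
            (secMix (N + k - ℓ) ((m : ℤ) - n) ⊗ₖ secMix k (κ : ℤ)))
    (ΓS : Matrix (Fin (N + k - ℓ) → Bool) (Fin (N + k - ℓ) → Bool) ℂ)
    (hΓS : ΓS = ((2 : ℂ) ^ k)⁻¹ •
      ∑ m ∈ Finset.range (N + k + 1), ∑ n ∈ Finset.range (ℓ + 1),
        ∑ κ ∈ Finset.range (k + 1),
          ((((Nat.choose ℓ n * Nat.choose k κ * chooseZ (N + k - ℓ) ((m : ℤ) - n) : ℕ) : ℂ) /
              (Nat.choose (N + k) m : ℂ)) * (χ ((m : ℤ) - κ) : ℂ)) •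
            secMix (N + k - ℓ) ((m : ℤ) - n)) :
    traceNorm (Γ₁ - ΓS ⊗ₖ (((2 : ℂ) ^ k)⁻¹ • (1 : Matrix (Fin k → Bool) (Fin k → Bool) ℂ))) =
      ((2 : ℝ) ^ k)⁻¹ *
        ∑ ν ∈ Finset.range (N + k - ℓ + 1), ∑ κ ∈ Finset.range (k + 1),
          (Nat.choose (N + k - ℓ) ν : ℝ) * (Nat.choose k κ : ℝ) *
            |∑ m ∈ Finset.range (N + k + 1),
                ((chooseZ ℓ ((m : ℤ) - ν) : ℝ) / (Nat.choose (N + k) m : ℝ)) *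
                  (χ ((m : ℤ) - κ) -
                    ((2 : ℝ) ^ k)⁻¹ *
                      ∑ κ' ∈ Finset.range (k + 1), (Nat.choose k κ' : ℝ) * χ ((m : ℤ) - κ'))| := by
  classical
  set g : ℕ → ℕ → ℝ := fun ν κ =>
    ∑ m ∈ Finset.range (N + k + 1),
      ((chooseZ ℓ ((m : ℤ) - ν) : ℝ) / (Nat.choose (N + k) m : ℝ)) *
        (χ ((m : ℤ) - κ) -
          ((2 : ℝ) ^ k)⁻¹ *
            ∑ κ' ∈ Finset.range (k + 1), (Nat.choose k κ' : ℝ) * χ ((m : ℤ) - κ')) with hgdef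
  have key : Γ₁ - ΓS ⊗ₖ (((2 : ℂ) ^ k)⁻¹ • (1 : Matrix (Fin k → Bool) (Fin k → Bool) ℂ)) =
      Matrix.diagonal (fun p : (Fin (N + k - ℓ) → Bool) × (Fin k → Bool) =>
        (((((2 : ℝ) ^ k)⁻¹ * g (wt p.1) (wt p.2) : ℝ)) : ℂ)) := by
    subst hΓ₁ hΓS
    ext ⟨v, w⟩ ⟨v', w'⟩
    simp only [Matrix.sub_apply, Matrix.smul_apply, Matrix.sum_apply,
      Matrix.kroneckerMap_apply, secMix, Matrix.diagonal_apply, smul_eq_mul,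
      Matrix.one_apply, Prod.mk.injEq]
    by_cases hv : v = v'
    · by_cases hw : w = w'
      · subst hv; subst hw
        simp only [if_pos rfl, and_self, if_true]
        have perM1 : ∀ m : ℕ,
            ∑ n ∈ Finset.range (ℓ + 1), ∑ κ ∈ Finset.range (k + 1),
              ((ℓ.choose n * k.choose κ * chooseZ (N + k - ℓ) ((m : ℤ) - n) : ℕ) : ℂ) /
                  (((N + k).choose m : ℕ) : ℂ) * ((χ ((m : ℤ) - κ) : ℝ) : ℂ) *
                ((((chooseZ (N + k - ℓ) ((m : ℤ) - n) : ℕ) : ℂ))⁻¹ *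
                    (if ((wt v : ℕ) : ℤ) = (m : ℤ) - n then 1 else 0) *
                  ((((chooseZ k (κ : ℤ) : ℕ) : ℂ))⁻¹ *
                    (if ((wt w : ℕ) : ℤ) = (κ : ℤ) then 1 else 0)))
            = ((chooseZ ℓ ((m : ℤ) - (wt v : ℕ)) : ℕ) : ℂ) / (((N + k).choose m : ℕ) : ℂ) *
                ((χ ((m : ℤ) - (wt w : ℕ)) : ℝ) : ℂ) := by
          intro m
          calc
            _ = ∑ n ∈ Finset.range (ℓ + 1), ∑ κ ∈ Finset.range (k + 1),
                  (((ℓ.choose n : ℂ) * ((chooseZ (N + k - ℓ) ((m : ℤ) - n) : ℕ) : ℂ)) *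
                      ((((chooseZ (N + k - ℓ) ((m : ℤ) - n) : ℕ) : ℂ))⁻¹ *
                        (if ((wt v : ℕ) : ℤ) = (m : ℤ) - n then 1 else 0))) *
                  (((k.choose κ : ℂ) * ((χ ((m : ℤ) - κ) : ℝ) : ℂ) *
                      ((((chooseZ k (κ : ℤ) : ℕ) : ℂ))⁻¹ *
                        (if ((wt w : ℕ) : ℤ) = (κ : ℤ) then 1 else 0))) *
                    ((((N + k).choose m : ℕ) : ℂ))⁻¹) := by
              refine Finset.sum_congr rfl fun n _ => Finset.sum_congr rfl fun κ _ => ?_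
              push_cast
              ring
            _ = (∑ n ∈ Finset.range (ℓ + 1),
                  ((ℓ.choose n : ℂ) * ((chooseZ (N + k - ℓ) ((m : ℤ) - n) : ℕ) : ℂ)) *
                      ((((chooseZ (N + k - ℓ) ((m : ℤ) - n) : ℕ) : ℂ))⁻¹ *
                        (if ((wt v : ℕ) : ℤ) = (m : ℤ) - n then 1 else 0))) *
                ∑ κ ∈ Finset.range (k + 1),
                  ((k.choose κ : ℂ) * ((χ ((m : ℤ) - κ) : ℝ) : ℂ) *
                      ((((chooseZ k (κ : ℤ) : ℕ) : ℂ))⁻¹ *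
                        (if ((wt w : ℕ) : ℤ) = (κ : ℤ) then 1 else 0))) *
                    ((((N + k).choose m : ℕ) : ℂ))⁻¹ :=
              (Finset.sum_mul_sum _ _ _ _).symm
            _ = _ := by
              rw [show (∑ κ ∈ Finset.range (k + 1),
                  ((k.choose κ : ℂ) * ((χ ((m : ℤ) - κ) : ℝ) : ℂ) *
                      ((((chooseZ k (κ : ℤ) : ℕ) : ℂ))⁻¹ *
                        (if ((wt w : ℕ) : ℤ) = (κ : ℤ) then 1 else 0))) *
                    ((((N + k).choose m : ℕ) : ℂ))⁻¹)
                  = (∑ κ ∈ Finset.range (k + 1),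
                      (k.choose κ : ℂ) * ((χ ((m : ℤ) - κ) : ℝ) : ℂ) *
                        ((((chooseZ k (κ : ℤ) : ℕ) : ℂ))⁻¹ *
                          (if ((wt w : ℕ) : ℤ) = (κ : ℤ) then 1 else 0))) *
                    ((((N + k).choose m : ℕ) : ℂ))⁻¹ from (Finset.sum_mul _ _ _).symm,
                n_collapse ℓ (N + k - ℓ) (wt v) (wt_le v) m,
                k_collapse k (wt w) (wt_le w) (fun κ => ((χ ((m : ℤ) - κ) : ℝ) : ℂ))]
              ring
        have perM2 : ∀ m : ℕ,
            ∑ n ∈ Finset.range (ℓ + 1), ∑ κ ∈ Finset.range (k + 1),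
              ((ℓ.choose n * k.choose κ * chooseZ (N + k - ℓ) ((m : ℤ) - n) : ℕ) : ℂ) /
                  (((N + k).choose m : ℕ) : ℂ) * ((χ ((m : ℤ) - κ) : ℝ) : ℂ) *
                ((((chooseZ (N + k - ℓ) ((m : ℤ) - n) : ℕ) : ℂ))⁻¹ *
                    (if ((wt v : ℕ) : ℤ) = (m : ℤ) - n then 1 else 0))
            = ((chooseZ ℓ ((m : ℤ) - (wt v : ℕ)) : ℕ) : ℂ) / (((N + k).choose m : ℕ) : ℂ) *
                ∑ κ ∈ Finset.range (k + 1),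
                  (k.choose κ : ℂ) * ((χ ((m : ℤ) - κ) : ℝ) : ℂ) := by
          intro m
          calc
            _ = ∑ n ∈ Finset.range (ℓ + 1), ∑ κ ∈ Finset.range (k + 1),
                  (((ℓ.choose n : ℂ) * ((chooseZ (N + k - ℓ) ((m : ℤ) - n) : ℕ) : ℂ)) *
                      ((((chooseZ (N + k - ℓ) ((m : ℤ) - n) : ℕ) : ℂ))⁻¹ *
                        (if ((wt v : ℕ) : ℤ) = (m : ℤ) - n then 1 else 0))) *
                  (((k.choose κ : ℂ) * ((χ ((m : ℤ) - κ) : ℝ) : ℂ)) *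
                    ((((N + k).choose m : ℕ) : ℂ))⁻¹) := by
              refine Finset.sum_congr rfl fun n _ => Finset.sum_congr rfl fun κ _ => ?_
              push_cast
              ring
            _ = (∑ n ∈ Finset.range (ℓ + 1),
                  ((ℓ.choose n : ℂ) * ((chooseZ (N + k - ℓ) ((m : ℤ) - n) : ℕ) : ℂ)) *
                      ((((chooseZ (N + k - ℓ) ((m : ℤ) - n) : ℕ) : ℂ))⁻¹ *
                        (if ((wt v : ℕ) : ℤ) = (m : ℤ) - n then 1 else 0))) *
                ∑ κ ∈ Finset.range (k + 1),
                  ((k.choose κ : ℂ) * ((χ ((m : ℤ) - κ) : ℝ) : ℂ)) *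
                    ((((N + k).choose m : ℕ) : ℂ))⁻¹ :=
              (Finset.sum_mul_sum _ _ _ _).symm
            _ = _ := by
              rw [n_collapse ℓ (N + k - ℓ) (wt v) (wt_le v) m,
                show (∑ κ ∈ Finset.range (k + 1),
                    ((k.choose κ : ℂ) * ((χ ((m : ℤ) - κ) : ℝ) : ℂ)) *
                      ((((N + k).choose m : ℕ) : ℂ))⁻¹)
                  = (∑ κ ∈ Finset.range (k + 1),
                      (k.choose κ : ℂ) * ((χ ((m : ℤ) - κ) : ℝ) : ℂ)) *
                    ((((N + k).choose m : ℕ) : ℂ))⁻¹ from (Finset.sum_mul _ _ _).symm]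
              ring
        rw [Finset.sum_congr rfl fun m _ => perM1 m,
          Finset.sum_congr rfl fun m _ => perM2 m, hgdef]
        push_cast
        rw [Finset.mul_sum, Finset.mul_sum, Finset.mul_sum, Finset.sum_mul,
          ← Finset.sum_sub_distrib]
        refine Finset.sum_congr rfl fun m _ => ?_
        push_cast
        ring
      · simp [hv, hw]
    · simp [hv]
  rw [key, show traceNorm (Matrix.diagonal (fun p : (Fin (N + k - ℓ) → Bool) × (Fin k → Bool) =>
        (((((2 : ℝ) ^ k)⁻¹ * g (wt p.1) (wt p.2) : ℝ)) : ℂ))) = _ from traceNorm_diagonal' _]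
  simp only [Complex.norm_real, Real.norm_eq_abs, Fintype.sum_prod_type]
  calc
    ∑ v : Fin (N + k - ℓ) → Bool, ∑ w : Fin k → Bool, |((2 : ℝ) ^ k)⁻¹ * g (wt v) (wt w)|
        = ∑ ν ∈ Finset.range (N + k - ℓ + 1), ((N + k - ℓ).choose ν : ℝ) *
            ∑ w : Fin k → Bool, |((2 : ℝ) ^ k)⁻¹ * g ν (wt w)| :=
      sum_wt_group (N + k - ℓ) (fun ν => ∑ w : Fin k → Bool, |((2 : ℝ) ^ k)⁻¹ * g ν (wt w)|)
    _ = ∑ ν ∈ Finset.range (N + k - ℓ + 1), ((N + k - ℓ).choose ν : ℝ) *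
          ∑ κ ∈ Finset.range (k + 1), (k.choose κ : ℝ) * |((2 : ℝ) ^ k)⁻¹ * g ν κ| := by
      refine Finset.sum_congr rfl fun ν _ => ?_
      rw [sum_wt_group k (fun κ => |((2 : ℝ) ^ k)⁻¹ * g ν κ|)]
    _ = _ := by
      simp only [Finset.mul_sum, hgdef]
      refine Finset.sum_congr rfl fun ν _ => Finset.sum_congr rfl fun κ _ => ?_
      rw [show (∑ i ∈ Finset.range (N + k + 1),
            ((2 : ℝ) ^ k)⁻¹ * ((chooseZ ℓ ((i : ℤ) - ν) : ℝ) / (((N + k).choose i : ℕ) : ℝ) *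
              (χ ((i : ℤ) - κ) -
                ∑ j ∈ Finset.range (k + 1),
                  ((2 : ℝ) ^ k)⁻¹ * ((k.choose j : ℝ) * χ ((i : ℤ) - j)))))
          = ((2 : ℝ) ^ k)⁻¹ * ∑ i ∈ Finset.range (N + k + 1),
              ((chooseZ ℓ ((i : ℤ) - ν) : ℝ) / (((N + k).choose i : ℕ) : ℝ) *
                (χ ((i : ℤ) - κ) -
                  ∑ j ∈ Finset.range (k + 1),
                    ((2 : ℝ) ^ k)⁻¹ * ((k.choose j : ℝ) * χ ((i : ℤ) - j))))
          from (Finset.mul_sum _ _ _).symm,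
        abs_mul, abs_of_nonneg (by positivity : (0:ℝ) ≤ ((2 : ℝ) ^ k)⁻¹)]
      ring
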